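/- Let f : Γ_+ → ℝ be smooth, symmetric, positive, and inverse concave. Then for every κ ∈ Γ_+ and every z = (z_1,…,z_n) ∈ ℝ^n one has ∑_{k,l=1}^n (∂²f/∂κ_k∂κ_l)(κ)·z_k z_l ≥ 2·( f(κ)^{-1}·(∑_{k=1}^n (∂f/∂κ_k)(κ)·z_k)² − ∑_{k=1}^n ((∂f/∂κ_k)(κ)/κ_k)·z_k² ). -/

import Mathlib

open Finset

/-- The positive cone `Γ₊ = {κ ∈ ℝⁿ : κᵢ > 0 for all i}`. -/
def PosCone (n : ℕ) : Set (Fin n → ℝ) := {κ | ∀ i, 0 < κ i}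

/-- The first partial derivative `∂f/∂κ_k` at `x`. -/
noncomputable def pd1 {n : ℕ} (f : (Fin n → ℝ) → ℝ) (k : Fin n) (x : Fin n → ℝ) : ℝ :=
  fderiv ℝ f x (Pi.single k 1)

/-- The second partial derivative `∂²f/∂κ_k∂κ_l` at `x`. -/
noncomputable def pd2 {n : ℕ} (f : (Fin n → ℝ) → ℝ) (k l : Fin n) (x : Fin n → ℝ) : ℝ :=
  fderiv ℝ (fun y => fderiv ℝ f y (Pi.single k 1)) x (Pi.single l 1)

/-- The dual function `f_*(τ) = f(τ₁⁻¹, …, τₙ⁻¹)⁻¹`. -/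
noncomputable def dualF {n : ℕ} (f : (Fin n → ℝ) → ℝ) (τ : Fin n → ℝ) : ℝ :=
  (f (fun i => (τ i)⁻¹))⁻¹

/-!
In the dual variables `τ = κ⁻¹` take the line `τ(t) = κ⁻¹ + t z κ⁻²`; inverse concavity makes
`t ↦ f(τ(t)⁻¹)⁻¹` concave, so its second derivative at `t = 0` is nonpositive. The curve
`c(t) = τ(t)⁻¹` has `c(0) = κ`, `c'(0) = -z` and `c''(0) = 2 z² / κ`, so `F = f ∘ c` has
`F'(0) = -Df(κ) z` and `F''(0) = D²f(κ)(z, z) + 2 Df(κ)(z² / κ)`, and `(1/F)'' ≤ 0` reads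
`2 F'(0)² / F(0) ≤ F''(0)`.
-/

theorem isOpen_posCone (n : ℕ) : IsOpen (PosCone n) := by
  simpa [PosCone, Set.ofPred_forall] using
    isOpen_iInter_of_finite fun i : Fin n => isOpen_lt continuous_const (continuous_apply i)

theorem ContinuousLinearMap.sum_apply_single_mul {ι : Type*} [Fintype ι] [DecidableEq ι]
    (L : (ι → ℝ) →L[ℝ] ℝ) (z : ι → ℝ) : ∑ k, L (Pi.single k 1) * z k = L z := by
  conv_rhs => rw [pi_eq_sum_univ' z]
  simp [map_sum, mul_comm]

theorem sum_pd1_mul {n : ℕ} (f : (Fin n → ℝ) → ℝ) (x z : Fin n → ℝ) :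
    ∑ k, pd1 f k x * z k = fderiv ℝ f x z :=
  (fderiv ℝ f x).sum_apply_single_mul z

theorem pd2_eq_fderiv_fderiv {n : ℕ} {f : (Fin n → ℝ) → ℝ} {x : Fin n → ℝ}
    (hf : DifferentiableAt ℝ (fderiv ℝ f) x) (k l : Fin n) :
    pd2 f k l x = fderiv ℝ (fderiv ℝ f) x (Pi.single l 1) (Pi.single k 1) := by
  simp [pd2, fderiv_clm_apply hf (differentiableAt_const _)]

theorem sum_sum_pd2_mul {n : ℕ} {f : (Fin n → ℝ) → ℝ} {x : Fin n → ℝ}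
    (hf : DifferentiableAt ℝ (fderiv ℝ f) x) (z : Fin n → ℝ) :
    ∑ k, ∑ l, pd2 f k l x * z k * z l = fderiv ℝ (fderiv ℝ f) x z z := by
  set D := fderiv ℝ (fderiv ℝ f) x
  have inner : ∀ k, ∑ l, D (Pi.single l 1) (Pi.single k 1) * z l = D z (Pi.single k 1) :=
    fun k => (D.flip (Pi.single k 1)).sum_apply_single_mul z
  calc ∑ k, ∑ l, pd2 f k l x * z k * z l
      = ∑ k, (∑ l, D (Pi.single l 1) (Pi.single k 1) * z l) * z k := by
        simp only [pd2_eq_fderiv_fderiv hf, Finset.sum_mul]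
        exact Finset.sum_congr rfl fun k _ => Finset.sum_congr rfl fun l _ => by ring
    _ = D z z := by simp only [inner]; exact (D z).sum_apply_single_mul z

theorem ConcaveOn.nonpos_of_hasDerivAt_of_hasDerivAt {I : Set ℝ} (hI : IsOpen I) {φ φ' : ℝ → ℝ}
    {x φ'' : ℝ} (hconc : ConcaveOn ℝ I φ) (hφ : ∀ t ∈ I, HasDerivAt φ (φ' t) t)
    (hφ' : HasDerivAt φ' φ'' x) (hx : x ∈ I) : φ'' ≤ 0 := by
  have hanti : AntitoneOn φ' I := by
    intro a ha b hb hab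
    rw [← (hφ a ha).deriv, ← (hφ b hb).deriv]
    exact hconc.antitoneOn_deriv (fun t ht => (hφ t ht).differentiableAt) ha hb hab
  exact hφ'.hasDerivWithinAt.nonpos_of_antitoneOn (hI.preperfect x hx) hanti

theorem two_mul_inv_mul_sq_le_of_concaveOn_inv {I : Set ℝ} (hI : IsOpen I) {F F' : ℝ → ℝ}
    {x F'' : ℝ} (hpos : ∀ t ∈ I, 0 < F t) (hconc : ConcaveOn ℝ I fun t => (F t)⁻¹)
    (hF : ∀ t ∈ I, HasDerivAt F (F' t) t) (hF' : HasDerivAt F' F'' x) (hx : x ∈ I) :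
    2 * (F x)⁻¹ * F' x ^ 2 ≤ F'' := by
  have hinv : ∀ t ∈ I, HasDerivAt (fun t => (F t)⁻¹) (-F' t / F t ^ 2) t :=
    fun t ht => (hF t ht).inv (hpos t ht).ne'
  have hinv' : HasDerivAt (fun t => -F' t / F t ^ 2)
      ((-F'' * F x ^ 2 + 2 * F x * F' x ^ 2) / (F x ^ 2) ^ 2) x := by
    refine (hF'.fun_neg.fun_div ((hF x hx).fun_pow 2)
      (pow_ne_zero 2 (hpos x hx).ne')).congr_deriv ?_
    norm_num
    ring
  have hconcave := hconc.nonpos_of_hasDerivAt_of_hasDerivAt hI hinv hinv' hx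
  have hFx := hpos x hx
  rw [div_le_iff₀ (by positivity), zero_mul] at hconcave
  rw [mul_comm 2, mul_assoc, inv_mul_le_iff₀ hFx]
  nlinarith

theorem ConcaveOn.comp_add_smul {E : Type*} [AddCommGroup E] [Module ℝ E] {s : Set E} {g : E → ℝ}
    (hg : ConcaveOn ℝ s g) (p q : E) :
    ConcaveOn ℝ {t : ℝ | p + t • q ∈ s} fun t => g (p + t • q) := by
  have hline : ∀ t : ℝ, AffineMap.lineMap p (p + q) t = p + t • q := fun t => by
    rw [AffineMap.lineMap_apply_module', add_sub_cancel_left, add_comm]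
  simpa only [Function.comp_def, Set.preimage, hline] using
    hg.comp_affineMap (AffineMap.lineMap p (p + q))

theorem hasDerivAt_inv_add_smul {ι : Type*} [Fintype ι] {p q : ι → ℝ} {t : ℝ}
    (h : ∀ i, p i + t * q i ≠ 0) :
    HasDerivAt (fun s : ℝ => (p + s • q)⁻¹) (-q / (p + t • q) ^ 2) t := by
  rw [hasDerivAt_pi]
  intro i
  simpa using (((hasDerivAt_id t).mul_const (q i)).const_add (p i)).fun_inv (h i)

theorem hasDerivAt_neg_div_add_smul_sq {ι : Type*} [Fintype ι] {p q : ι → ℝ} {t : ℝ}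
    (h : ∀ i, p i + t * q i ≠ 0) :
    HasDerivAt (fun s : ℝ => -q / (p + s • q) ^ 2) (2 * q ^ 2 / (p + t • q) ^ 3) t := by
  rw [hasDerivAt_pi]
  intro i
  have hsq_inv := ((((hasDerivAt_id t).mul_const (q i)).const_add (p i)).fun_pow 2).fun_inv
    (pow_ne_zero 2 (h i))
  refine (hsq_inv.const_mul (-q i)).congr_deriv ?_ |>.congr_of_eventuallyEq ?_
  · simp only [Nat.cast_ofNat, id_eq, Nat.add_one_sub_one, pow_one, one_mul, neg_mul,
      Pi.div_apply, Pi.mul_apply, Pi.ofNat_apply, Pi.pow_apply, Pi.add_apply, Pi.smul_apply,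
      smul_eq_mul]
    field_simp
  · simp [div_eq_mul_inv]

theorem hessian_lower_bound_of_concaveOn_dualF {n : ℕ} {f : (Fin n → ℝ) → ℝ}
    (hsmooth : ContDiffOn ℝ 2 f (PosCone n)) (hpos : ∀ κ ∈ PosCone n, 0 < f κ)
    (hinvconc : ConcaveOn ℝ (PosCone n) (dualF f)) {κ : Fin n → ℝ} (hκ : κ ∈ PosCone n)
    (z : Fin n → ℝ) :
    2 * (f κ)⁻¹ * fderiv ℝ f κ z ^ 2 ≤
      fderiv ℝ (fderiv ℝ f) κ z z + 2 * fderiv ℝ f κ (z ^ 2 / κ) := by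
  set p : Fin n → ℝ := κ⁻¹
  set q : Fin n → ℝ := z / κ ^ 2
  set I : Set ℝ := {t | p + t • q ∈ PosCone n}
  have hI : IsOpen I := (isOpen_posCone n).preimage (by fun_prop)
  have h0 : (0 : ℝ) ∈ I := by simpa [I, p, PosCone] using hκ
  have hne : ∀ t ∈ I, ∀ i, p i + t * q i ≠ 0 := fun t ht i => (ht i).ne'
  have hcurve : ∀ t ∈ I, (p + t • q)⁻¹ ∈ PosCone n := fun t ht i => inv_pos.mpr (ht i)
  have hfC : ∀ x ∈ PosCone n, ContDiffAt ℝ 2 f x := fun x hx =>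
    hsmooth.contDiffAt ((isOpen_posCone n).mem_nhds hx)
  have hF : ∀ t ∈ I, HasDerivAt (fun s => f (p + s • q)⁻¹)
      (fderiv ℝ f (p + t • q)⁻¹ (-q / (p + t • q) ^ 2)) t := fun t ht =>
    ((hfC _ (hcurve t ht)).differentiableAt two_ne_zero).hasFDerivAt.comp_hasDerivAt t
      (hasDerivAt_inv_add_smul (hne t ht))
  have hpos' : ∀ t ∈ I, 0 < f (p + t • q)⁻¹ := fun t ht => hpos _ (hcurve t ht)
  have hκ0 : p⁻¹ = κ := inv_inv κ
  have hD2 : HasFDerivAt (fderiv ℝ f) (fderiv ℝ (fderiv ℝ f) κ) κ :=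
    (((hfC κ hκ).fderiv_right le_rfl).differentiableAt one_ne_zero).hasFDerivAt
  have hF' := (hD2.comp_hasDerivAt_of_eq 0 (hasDerivAt_inv_add_smul (hne 0 h0))
    (by simp [hκ0])).clm_apply (hasDerivAt_neg_div_add_smul_sq (hne 0 h0))
  have hbound := two_mul_inv_mul_sq_le_of_concaveOn_inv hI hpos' (hinvconc.comp_add_smul p q)
    hF hF' h0
  have hd1 : -q / p ^ 2 = -z := by
    funext i
    have := (hκ i).ne'
    simp only [p, q, Pi.div_apply, Pi.neg_apply, Pi.pow_apply, Pi.inv_apply]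
    field_simp
  have hd2 : 2 * q ^ 2 / p ^ 3 = (2 : ℝ) • (z ^ 2 / κ) := by
    funext i
    have := (hκ i).ne'
    simp only [p, q, Pi.div_apply, Pi.mul_apply, Pi.ofNat_apply, Pi.pow_apply, Pi.inv_apply,
      Pi.smul_apply, smul_eq_mul]
    field_simp
  simpa only [Function.comp_apply, zero_smul, add_zero, hκ0, hd1, hd2, map_neg, neg_neg,
    neg_apply, even_two.neg_pow, map_smul, smul_eq_mul] using hbound

theorem inverse_concave_hessian_lower_bound_general (n : ℕ) (f : (Fin n → ℝ) → ℝ)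
    (hsmooth : ContDiffOn ℝ (⊤ : ℕ∞) f (PosCone n))
    (hpos : ∀ κ ∈ PosCone n, 0 < f κ)
    (hinvconc : ConcaveOn ℝ (PosCone n) (dualF f)) :
    ∀ κ ∈ PosCone n, ∀ z : Fin n → ℝ,
      2 * ((f κ)⁻¹ * (∑ k : Fin n, pd1 f k κ * z k) ^ 2
            - ∑ k : Fin n, (pd1 f k κ / κ k) * z k ^ 2)
        ≤ ∑ k : Fin n, ∑ l : Fin n, pd2 f k l κ * z k * z l := by
  intro κ hκ z
  have hC2 : ContDiffOn ℝ 2 f (PosCone n) := hsmooth.of_le (WithTop.coe_le_coe.mpr le_top)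
  have hD2 : DifferentiableAt ℝ (fderiv ℝ f) κ :=
    ((hC2.contDiffAt ((isOpen_posCone n).mem_nhds hκ)).fderiv_right le_rfl).differentiableAt
      one_ne_zero
  have hR : ∑ k, pd1 f k κ / κ k * z k ^ 2 = fderiv ℝ f κ (z ^ 2 / κ) := by
    rw [← sum_pd1_mul]
    exact Finset.sum_congr rfl fun k _ => by simp only [Pi.div_apply, Pi.pow_apply]; ring
  rw [sum_pd1_mul, sum_sum_pd2_mul hD2, hR]
  linarith [hessian_lower_bound_of_concaveOn_dualF hC2 hpos hinvconc hκ z]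

/-- If `f` is smooth, symmetric, positive and inverse concave on `Γ₊`, then
`∑_{k,l} (∂²f/∂κ_k∂κ_l) z_k z_l ≥ 2 (f⁻¹ (∑_k (∂f/∂κ_k) z_k)² − ∑_k (∂f/∂κ_k / κ_k) z_k²)`. -/
theorem inverse_concave_hessian_lower_bound (n : ℕ) (f : (Fin n → ℝ) → ℝ)
    (hsmooth : ContDiffOn ℝ (⊤ : ℕ∞) f (PosCone n))
    (hsym : ∀ σ : Equiv.Perm (Fin n), ∀ κ ∈ PosCone n, f (κ ∘ σ) = f κ)
    (hpos : ∀ κ ∈ PosCone n, 0 < f κ)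
    (hinvconc : ConcaveOn ℝ (PosCone n) (dualF f)) :
    ∀ κ ∈ PosCone n, ∀ z : Fin n → ℝ,
      2 * ((f κ)⁻¹ * (∑ k : Fin n, pd1 f k κ * z k) ^ 2
            - ∑ k : Fin n, (pd1 f k κ / κ k) * z k ^ 2)
        ≤ ∑ k : Fin n, ∑ l : Fin n, pd2 f k l κ * z k * z l :=
  inverse_concave_hessian_lower_bound_general n f hsmooth hpos hinvconc
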